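/- Let ℓ ≥ 1 and 0 ≤ r ≤ ℓ, let X_r ⊆ ℂ^{ℓ×ℓ} be the set of matrices of rank at most r, and let W ⊆ ℂ^{ℓ×ℓ} be a (complex linear) subspace with W ∩ X_r = {0}. Then there exists a constant D < 1 such that |⟨A,B⟩| ≤ D·‖A‖·‖B‖ for all A ∈ X_r and B ∈ W, where ⟨A,B⟩ = trace(AB*) and ‖·‖ is the Frobenius norm. -/

import Mathlib

open Matrix
open scoped ComplexOrder

/-- Frobenius norm of a real matrix: `‖A‖ = √(trace (A Aᵀ))`. -/
noncomputable def frobR {n l : ℕ} (A : Matrix (Fin n) (Fin l) ℝ) : ℝ :=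
  Real.sqrt (Matrix.trace (A * Aᵀ))

/-- Frobenius norm of a complex matrix: `‖A‖ = √(trace (A Aᴴ))`. -/
noncomputable def frobC {n l : ℕ} (A : Matrix (Fin n) (Fin l) ℂ) : ℝ :=
  Real.sqrt (Matrix.trace (A * Aᴴ)).re

open Classical in
/-- The unique positive semidefinite square root of a positive semidefinite real
symmetric matrix (junk value `0` if `M` is not positive semidefinite). -/
noncomputable def matSqrtR {k : ℕ} (M : Matrix (Fin k) (Fin k) ℝ) : Matrix (Fin k) (Fin k) ℝ :=
  if h : M.PosSemidef then
    (h.1.eigenvectorUnitary : Matrix (Fin k) (Fin k) ℝ) *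
      Matrix.diagonal ((↑) ∘ Real.sqrt ∘ h.1.eigenvalues) *
      (star h.1.eigenvectorUnitary : Matrix (Fin k) (Fin k) ℝ)
  else 0

open Classical in
/-- The unique positive semidefinite square root of a positive semidefinite hermitian
matrix (junk value `0` if `M` is not positive semidefinite). -/
noncomputable def matSqrtC {k : ℕ} (M : Matrix (Fin k) (Fin k) ℂ) : Matrix (Fin k) (Fin k) ℂ :=
  if h : M.PosSemidef then
    (h.1.eigenvectorUnitary : Matrix (Fin k) (Fin k) ℂ) *
      Matrix.diagonal ((↑) ∘ Real.sqrt ∘ h.1.eigenvalues) *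
      (star h.1.eigenvectorUnitary : Matrix (Fin k) (Fin k) ℂ)
  else 0

/-- Orbit distance for the orthogonal group `O(n)` acting by left multiplication. -/
noncomputable def dO {n l : ℕ} (A B : Matrix (Fin n) (Fin l) ℝ) : ℝ :=
  sInf {x | ∃ W ∈ Matrix.orthogonalGroup (Fin n) ℝ, x = frobR (W * A - B)}

/-- Orbit distance for the unitary group `U(n)` acting by left multiplication. -/
noncomputable def dU {n l : ℕ} (A B : Matrix (Fin n) (Fin l) ℂ) : ℝ :=
  sInf {x | ∃ W ∈ Matrix.unitaryGroup (Fin n) ℂ, x = frobC (W * A - B)}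

/-- `q𝟙ᵀ` : the `n × l` matrix each of whose columns equals `q` (real case). -/
def colMatR {n l : ℕ} (q : Fin n → ℝ) : Matrix (Fin n) (Fin l) ℝ :=
  Matrix.of fun i _ => q i

/-- `q𝟙ᵀ` : the `n × l` matrix each of whose columns equals `q` (complex case). -/
def colMatC {n l : ℕ} (q : Fin n → ℂ) : Matrix (Fin n) (Fin l) ℂ :=
  Matrix.of fun i _ => q i

/-- Orbit distance for the euclidean group `E(n) = O(n) ⋉ ℝⁿ` acting columnwise. -/
noncomputable def dE {n l : ℕ} (A B : Matrix (Fin n) (Fin l) ℝ) : ℝ :=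
  sInf {x | ∃ P ∈ Matrix.orthogonalGroup (Fin n) ℝ, ∃ q : Fin n → ℝ,
    x = frobR (P * A + colMatR q - B)}

/-- Orbit distance for the complex euclidean group `F(n) = U(n) ⋉ ℂⁿ` acting columnwise. -/
noncomputable def dF {n l : ℕ} (A B : Matrix (Fin n) (Fin l) ℂ) : ℝ :=
  sInf {x | ∃ P ∈ Matrix.unitaryGroup (Fin n) ℂ, ∃ q : Fin n → ℂ,
    x = frobC (P * A + colMatC q - B)}

/-- Column-centering `π` : subtract from each column the average of all columns (real case). -/
noncomputable def centerR {n l : ℕ} (A : Matrix (Fin n) (Fin l) ℝ) : Matrix (Fin n) (Fin l) ℝ :=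
  Matrix.of fun i j => A i j - (∑ k, A i k) / (l : ℝ)

/-- Column-centering `π_ℂ` : subtract from each column the average of all columns (complex case). -/
noncomputable def centerC {n l : ℕ} (A : Matrix (Fin n) (Fin l) ℂ) : Matrix (Fin n) (Fin l) ℂ :=
  Matrix.of fun i j => A i j - (∑ k, A i k) / (l : ℂ)

/-!
Normalize both sides: the pairs `(A, B)` with `A` of rank `≤ r`, `B ∈ W` and `‖A‖ = ‖B‖ = 1`
form a compact set, because rank `≤ r` is a closed condition (linear independence is open).
The continuous function `|⟨A, B⟩|` attains its maximum `D` there, and `D < 1`, since equality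
in Cauchy–Schwarz would make `A` a multiple of `B`, i.e. a nonzero element of `W ∩ X_r`.
-/

namespace Matrix

variable {𝕜 m n : Type*}

theorem rank_le_iff_forall_not_linearIndependent_mulVec [Fintype n] [Field 𝕜]
    (A : Matrix m n 𝕜) (r : ℕ) :
    A.rank ≤ r ↔ ∀ v : Fin (r + 1) → n → 𝕜, ¬LinearIndependent 𝕜 fun i ↦ A *ᵥ v i := by
  constructor
  · intro hA v hv
    let f : Fin (r + 1) → LinearMap.range A.mulVecLin := fun i ↦ ⟨A *ᵥ v i, v i, rfl⟩
    have hf : LinearIndependent 𝕜 f := hv.of_comp (Submodule.subtype _)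
    have hcard := hf.fintype_card_le_finrank
    rw [Fintype.card_fin] at hcard
    exact Nat.not_succ_le_self r (hcard.trans hA)
  · intro h
    by_contra! hA
    obtain ⟨f, hf⟩ :=
      exists_linearIndependent_of_le_finrank (R := 𝕜) (M := LinearMap.range A.mulVecLin) hA
    choose v hv using fun i ↦ (f i).2
    have hAv : (fun i ↦ A *ᵥ v i) = (LinearMap.range A.mulVecLin).subtype ∘ f := funext hv
    exact h v (hAv ▸ hf.map' _ (Submodule.ker_subtype _))

theorem isClosed_setOf_rank_le [Fintype m] [Fintype n] [NontriviallyNormedField 𝕜]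
    [CompleteSpace 𝕜] (r : ℕ) : IsClosed {A : Matrix m n 𝕜 | A.rank ≤ r} := by
  simp_rw [rank_le_iff_forall_not_linearIndependent_mulVec, Set.ofPred_forall]
  refine isClosed_iInter fun v ↦ ?_
  refine (isOpen_setOfPred_linearIndependent.preimage ?_).isClosed_compl
  fun_prop

noncomputable def toEuclideanSpace [RCLike 𝕜] : Matrix m n 𝕜 ≃ₗ[𝕜] EuclideanSpace 𝕜 (m × n) :=
  (LinearEquiv.curry 𝕜 𝕜 m n).symm ≪≫ₗ (WithLp.linearEquiv 2 𝕜 _).symm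

@[simp]
theorem toEuclideanSpace_apply [RCLike 𝕜] (A : Matrix m n 𝕜) (p : m × n) :
    toEuclideanSpace A p = A p.1 p.2 :=
  rfl

theorem inner_toEuclideanSpace [Fintype m] [Fintype n] [RCLike 𝕜] (A B : Matrix m n 𝕜) :
    inner 𝕜 (toEuclideanSpace A) (toEuclideanSpace B) = trace (B * Aᴴ) := by
  simp [PiLp.inner_apply, Fintype.sum_prod_type, trace, mul_apply]

end Matrix

theorem frobC_eq_norm_toEuclideanSpace {n l : ℕ} (A : Matrix (Fin n) (Fin l) ℂ) :
    frobC A = ‖toEuclideanSpace A‖ := by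
  rw [frobC, ← inner_toEuclideanSpace, norm_eq_sqrt_re_inner (𝕜 := ℂ)]
  rfl

section InnerProductSpace

variable {𝕜 E : Type*} [RCLike 𝕜] [NormedAddCommGroup E] [InnerProductSpace 𝕜 E]

theorem norm_inner_le_mul_norm_mul_norm_of_sphere {C : Set E}
    (hC : ∀ x ∈ C, ∀ t : ℝ, 0 < t → (t : 𝕜) • x ∈ C) (W : Submodule 𝕜 E) {D : ℝ}
    (hD : ∀ x ∈ C ∩ Metric.sphere 0 1, ∀ y ∈ (W : Set E) ∩ Metric.sphere 0 1,
      ‖inner 𝕜 x y‖ ≤ D)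
    {x y : E} (hx : x ∈ C) (hy : y ∈ W) : ‖inner 𝕜 x y‖ ≤ D * ‖x‖ * ‖y‖ := by
  rcases eq_or_ne x 0 with rfl | hx₀
  · simp
  rcases eq_or_ne y 0 with rfl | hy₀
  · simp
  have hxpos : 0 < ‖x‖ := norm_pos_iff.mpr hx₀
  have hypos : 0 < ‖y‖ := norm_pos_iff.mpr hy₀
  have hunit := hD (((‖x‖⁻¹ : ℝ) : 𝕜) • x)
    ⟨hC x hx _ (inv_pos.mpr hxpos), by simp [norm_smul, hxpos.ne']⟩
    (((‖y‖⁻¹ : ℝ) : 𝕜) • y) ⟨W.smul_mem _ hy, by simp [norm_smul, hypos.ne']⟩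
  rw [inner_smul_left, inner_smul_right, norm_mul, norm_mul, RCLike.norm_conj,
    RCLike.norm_ofReal, RCLike.norm_ofReal, abs_inv, abs_inv, abs_norm, abs_norm] at hunit
  calc ‖inner 𝕜 x y‖ = ‖x‖ * ‖y‖ * (‖x‖⁻¹ * (‖y‖⁻¹ * ‖inner 𝕜 x y‖)) := by field_simp
    _ ≤ ‖x‖ * ‖y‖ * D := by gcongr
    _ = D * ‖x‖ * ‖y‖ := by ring

theorem exists_lt_one_norm_inner_le_of_inter_subset_zero [FiniteDimensional 𝕜 E] {C : Set E}
    (hCc : IsClosed C) (hC : ∀ x ∈ C, ∀ t : ℝ, 0 < t → (t : 𝕜) • x ∈ C)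
    (W : Submodule 𝕜 E) (hCW : C ∩ W ⊆ {0}) :
    ∃ D < 1, ∀ x ∈ C, ∀ y ∈ W, ‖inner 𝕜 x y‖ ≤ D * ‖x‖ * ‖y‖ := by
  have := FiniteDimensional.proper_rclike 𝕜 E
  set K := C ∩ Metric.sphere (0 : E) 1
  set S := (W : Set E) ∩ Metric.sphere (0 : E) 1
  have hK : IsCompact K := (isCompact_sphere 0 1).inter_left hCc
  have hS : IsCompact S := (isCompact_sphere 0 1).inter_left W.closed_of_finiteDimensional
  rcases (K ×ˢ S).eq_empty_or_nonempty with hKS | hKS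
  · refine ⟨0, one_pos, fun x hx y hy ↦ norm_inner_le_mul_norm_mul_norm_of_sphere hC W ?_ hx hy⟩
    exact fun x hx y hy ↦ absurd (hKS ▸ Set.mk_mem_prod hx hy) (Set.notMem_empty _)
  obtain ⟨⟨x₀, y₀⟩, ⟨hx₀, hy₀⟩, hmax⟩ := (hK.prod hS).exists_isMaxOn hKS
    (continuous_fst.inner (𝕜 := 𝕜) continuous_snd).norm.continuousOn
  refine ⟨‖inner 𝕜 x₀ y₀‖, ?_, fun x hx y hy ↦ norm_inner_le_mul_norm_mul_norm_of_sphere hC W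
    (fun x hx y hy ↦ hmax (Set.mk_mem_prod hx hy)) hx hy⟩
  have hx₁ : ‖x₀‖ = 1 := mem_sphere_zero_iff_norm.mp hx₀.2
  have hy₁ : ‖y₀‖ = 1 := mem_sphere_zero_iff_norm.mp hy₀.2
  have hx₀' : x₀ ≠ 0 := ne_zero_of_norm_ne_zero (by simp [hx₁])
  have hy₀' : y₀ ≠ 0 := ne_zero_of_norm_ne_zero (by simp [hy₁])
  refine lt_of_le_of_ne (by simpa [hx₁, hy₁] using norm_inner_le_norm (𝕜 := 𝕜) x₀ y₀)
    fun heq ↦ ?_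
  obtain ⟨c, -, hc⟩ := (norm_inner_eq_norm_iff (𝕜 := 𝕜) hy₀' hx₀').mp
    (by rw [norm_inner_symm, heq, hx₁, hy₁, mul_one])
  exact hx₀' (hCW ⟨hx₀.1, hc ▸ W.smul_mem c hy₀.1⟩)

end InnerProductSpace

theorem stmt15_general (l r : ℕ)
    (W : Submodule ℂ (Matrix (Fin l) (Fin l) ℂ))
    (hW : (W : Set (Matrix (Fin l) (Fin l) ℂ)) ∩ {M | M.rank ≤ r} = {0}) :
    ∃ D : ℝ, D < 1 ∧
      ∀ A : Matrix (Fin l) (Fin l) ℂ, A.rank ≤ r → ∀ B ∈ W,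
        ‖Matrix.trace (A * Bᴴ)‖ ≤ D * frobC A * frobC B := by
  let e : Matrix (Fin l) (Fin l) ℂ ≃ₗ[ℂ] EuclideanSpace ℂ (Fin l × Fin l) := toEuclideanSpace
  let X : Set (EuclideanSpace ℂ (Fin l × Fin l)) := e.symm ⁻¹' {M | M.rank ≤ r}
  let W' : Submodule ℂ (EuclideanSpace ℂ (Fin l × Fin l)) := W.map (e : _ →ₗ[ℂ] _)
  have hX : IsClosed X :=
    (isClosed_setOf_rank_le r).preimage (LinearMap.continuous_of_finiteDimensional _)
  have hXsmul : ∀ x ∈ X, ∀ t : ℝ, 0 < t → (t : ℂ) • x ∈ X := fun x hx t ht ↦ by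
    rw [Set.mem_preimage, map_smul, Set.mem_ofPred_eq, rank_smul_of_mem_nonZeroDivisors _
      (mem_nonZeroDivisors_of_ne_zero (Complex.ofReal_ne_zero.mpr ht.ne'))]
    exact hx
  have hXW : X ∩ W' ⊆ {0} := fun x ⟨hxr, hxW⟩ ↦ by
    have : e.symm x ∈ ({0} : Set _) := hW ▸ ⟨(Submodule.mem_map_equiv _).mp hxW, hxr⟩
    simpa using this
  obtain ⟨D, hD1, hD⟩ := exists_lt_one_norm_inner_le_of_inter_subset_zero hX hXsmul W' hXW
  refine ⟨D, hD1, fun A hA B hB ↦ ?_⟩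
  have := hD (e A) (by simpa [X] using hA) (e B) (Submodule.mem_map_of_mem hB)
  rwa [norm_inner_symm, inner_toEuclideanSpace, ← frobC_eq_norm_toEuclideanSpace,
    ← frobC_eq_norm_toEuclideanSpace] at this

/-- Lemma: if `W` is a subspace of `ℂ^{ℓ×ℓ}` meeting the rank-`≤ r` matrices only in `0`,
then there is a constant `D < 1` with `|⟨A,B⟩| ≤ D‖A‖‖B‖` for all `A` of rank `≤ r` and `B ∈ W`. -/
theorem stmt15 (l r : ℕ) (hl : 1 ≤ l) (hr : r ≤ l)
    (W : Submodule ℂ (Matrix (Fin l) (Fin l) ℂ))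
    (hW : (W : Set (Matrix (Fin l) (Fin l) ℂ)) ∩ {M | M.rank ≤ r} = {0}) :
    ∃ D : ℝ, D < 1 ∧
      ∀ A : Matrix (Fin l) (Fin l) ℂ, A.rank ≤ r → ∀ B ∈ W,
        ‖Matrix.trace (A * Bᴴ)‖ ≤ D * frobC A * frobC B :=
  stmt15_general l r W hW
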